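/- Let W be a type, S a subset of W, and f, g : W → [0,1]. Then ⨅_{w ∈ S} (f w ⇒ g w) ≤ ((⨆_{w ∈ S} f w) ⇒ (⨆_{w ∈ S} g w)). (This is soundness of the axiom (P): □(φ → ψ) → (◇φ → ◇ψ) at any world of any crisp Gödel-Kripke model.) -/
import Mathlib

open unitInterval

instance : Fact ((0:ℝ) ≤ 1) := ⟨zero_le_one⟩

noncomputable instance : CompleteLattice unitInterval := Set.Icc.completeLattice

/-- Gödel implication on the unit interval. -/
noncomputable def gimp (a b : unitInterval) : unitInterval := if a ≤ b then 1 else b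

infixr:60 " ⇒ " => gimp

/-- Gödel negation on the unit interval. -/
noncomputable def gneg (a : unitInterval) : unitInterval := a ⇒ 0

theorem soundness_P {W : Type*} (S : Set W) (f g : W → unitInterval) :
    (⨅ w ∈ S, (f w ⇒ g w)) ≤ ((⨆ w ∈ S, f w) ⇒ (⨆ w ∈ S, g w)) := by
  unfold gimp
  split
  · exact le_top
  · rename_i h
    rw [iSup₂_le_iff] at h
    push_neg at h
    obtain ⟨w, hw, hfw⟩ := h
    have h2 : ¬ f w ≤ g w := fun hc => (hc.trans (le_iSup₂ (f := fun w _ => g w) w hw)).not_gt hfw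
    calc (⨅ w ∈ S, if f w ≤ g w then (1:unitInterval) else g w)
        ≤ if f w ≤ g w then 1 else g w := biInf_le _ hw
      _ = g w := if_neg h2
      _ ≤ ⨆ w ∈ S, g w := le_iSup₂ (f := fun w _ => g w) w hw
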